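/- Let R be a commutative local ring and A ∈ M₂(R). Then A is strongly rad-clean if and only if A ∈ GL₂(R), or A ∈ J(M₂(R)), or tr(A) ∈ U(R), det(A) ∈ J(R), and the quadratic equation x² + x = det(A)/(tr(A)² − 4det(A)) is solvable in R. -/

import Mathlib

/-- `j` lies in the Jacobson radical of the corner ring `eSe` (with identity `e`):
every element of the form `e - (eye)·j` is invertible in the corner ring. -/
def MemCornerJacobson {S : Type*} [Ring S] (e j : S) : Prop :=
  ∀ y : S, ∃ s : S,
    e * s * e = s ∧ s * (e - e * y * e * j) = e ∧ (e - e * y * e * j) * s = e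

/-- `a` is strongly rad-clean: `a = e + u` with `e` idempotent, `u` a unit,
`ae = ea` and `eae ∈ J(eSe)`. -/
def IsStronglyRadClean {S : Type*} [Ring S] (a : S) : Prop :=
  ∃ e : S, IsIdempotentElem e ∧ IsUnit (a - e) ∧ a * e = e * a ∧
    MemCornerJacobson e (e * a * e)

/-!
An idempotent `e` of `M₂(R)` over a local ring `R` is `0`, `1`, or has trace `1` and determinant
`0`; in the last case every matrix commuting with `e` is `l • e + u • (1 - e)` with `l, u ∈ R`. So a strongly rad-clean decomposition `A = e + (A - e)` with `e = 0`, `e = 1` or `e` of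
rank one says respectively that `A` is a unit, that `A ∈ J(M₂(R))`, or that the characteristic
polynomial `X² - tr A X + det A` has a root `l ∈ J(R)` (as `eAe = l • e`) and a unit root `u`
(as `A - e = (l - 1) • e + u • (1 - e)`); conversely two such roots give the idempotent
`e = (u - l)⁻¹ • (u • 1 - A)`. Finally `X² - t X + d` has such roots iff `t` is a unit, `d ∈ J(R)`
and `(t² - 4d)(x² + x) = d` is solvable: the roots are `x t / (1 + 2x)` and `(1 + x) t / (1 + 2x)`,
because `(1 + 2x)² (t² - 4d) = t²`.
-/

open Matrix IsLocalRing

section Ring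

variable {S : Type*} [Ring S]

theorem isStronglyRadClean_of_isUnit {a : S} (ha : IsUnit a) : IsStronglyRadClean a :=
  ⟨0, .zero, by simpa using ha, by simp, fun _ => ⟨0, by simp, by simp, by simp⟩⟩

/-- `e` commutes with `u = 1 - c`, hence with `u⁻¹`, and `e * u⁻¹` inverts `e - c = u * e`
in the corner ring `eSe`. -/
theorem exists_corner_inverse_of_isUnit_one_sub {e c : S} (he : IsIdempotentElem e)
    (hec : e * c = c) (hce : c * e = c) (hc : IsUnit (1 - c)) :
    ∃ s, e * s * e = s ∧ s * (e - c) = e ∧ (e - c) * s = e := by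
  obtain ⟨u, hu⟩ := hc
  have hue : ↑u * e = e - c := by rw [hu, sub_mul, one_mul, hce]
  have heu : e * ↑u = e - c := by rw [hu, mul_sub, mul_one, hec]
  have hcomm : Commute e ↑u⁻¹ := Commute.units_inv_right (heu.trans hue.symm)
  refine ⟨e * ↑u⁻¹, ?_, ?_, ?_⟩
  · rw [← mul_assoc e e, he.eq, mul_assoc, ← hcomm.eq, ← mul_assoc, he.eq]
  · rw [← hue, mul_assoc, ← mul_assoc _ _ e, Units.inv_mul, one_mul, he.eq]
  · rw [← hue, mul_assoc, ← mul_assoc e e, he.eq, hcomm.eq, ← mul_assoc, Units.mul_inv, one_mul]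

theorem memCornerJacobson_of_forall_isUnit {e j : S} (he : IsIdempotentElem e) (hj : j * e = j)
    (h : ∀ y, IsUnit (1 - e * y * e * j)) : MemCornerJacobson e j := fun y =>
  exists_corner_inverse_of_isUnit_one_sub he (by simp only [← mul_assoc, he.eq])
    (by rw [mul_assoc, hj]) (h y)

theorem memCornerJacobson_one_iff {j : S} : MemCornerJacobson 1 j ↔ ∀ y, IsUnit (1 - y * j) := by
  refine ⟨fun h y => ?_, fun h => memCornerJacobson_of_forall_isUnit .one (mul_one j) (by simpa)⟩
  obtain ⟨s, -, hs, hs'⟩ := h y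
  simp only [one_mul, mul_one] at hs hs'
  exact ⟨⟨_, s, hs', hs⟩, rfl⟩

theorem eq_zero_of_memCornerJacobson_smul {R : Type*} [CommRing R] [Algebra R S] {e : S} {r : R}
    (he : IsIdempotentElem e) (hr : IsUnit r) (h : MemCornerJacobson e (r • e)) : e = 0 := by
  obtain ⟨u, rfl⟩ := hr
  obtain ⟨s, -, hs, -⟩ := h ((↑u⁻¹ : R) • 1)
  simpa [smul_smul, he.eq] using hs.symm

theorem smul_add_smul_one_sub_mul {R : Type*} [CommRing R] [Algebra R S] {e : S}
    (he : IsIdempotentElem e) (a b c d : R) :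
    (a • e + b • (1 - e)) * (c • e + d • (1 - e)) = (a * c) • e + (b * d) • (1 - e) := by
  simp only [add_mul, mul_add, smul_mul_smul, he.eq, he.mul_one_sub_self, he.one_sub_mul_self,
    he.one_sub.eq, smul_zero, add_zero, zero_add]

theorem isUnit_smul_add_smul_one_sub {R : Type*} [CommRing R] [Algebra R S] {e : S}
    (he : IsIdempotentElem e) {a b : R} (ha : IsUnit a) (hb : IsUnit b) :
    IsUnit (a • e + b • (1 - e)) := by
  obtain ⟨u, rfl⟩ := ha
  obtain ⟨v, rfl⟩ := hb
  refine isUnit_iff_exists.2 ⟨(↑u⁻¹ : R) • e + (↑v⁻¹ : R) • (1 - e), ?_, ?_⟩ <;>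
    simp [smul_add_smul_one_sub_mul he]

end Ring

namespace IsLocalRing

variable {R : Type*} [CommRing R] [IsLocalRing R]

theorem eq_zero_or_eq_one_of_isIdempotentElem {a : R} (ha : IsIdempotentElem a) :
    a = 0 ∨ a = 1 := by
  rcases isUnit_or_isUnit_one_sub_self a with hu | hu
  · exact .inr ((IsIdempotentElem.iff_eq_one_of_isUnit hu).1 ha)
  · exact .inl (sub_eq_self.1 ((IsIdempotentElem.iff_eq_one_of_isUnit hu).1 ha.one_sub))

theorem isUnit_add_of_mem_maximalIdeal {a b : R} (ha : a ∈ maximalIdeal R) (hb : IsUnit b) :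
    IsUnit (a + b) :=
  (isUnit_or_isUnit_of_isUnit_add (a := a + b) (b := -a) (by simpa using hb)).resolve_right
    (by simpa using ha)

theorem exists_mem_maximalIdeal_isUnit_iff {t d : R} :
    (∃ l u, l ∈ maximalIdeal R ∧ IsUnit u ∧ l + u = t ∧ l * u = d) ↔
      IsUnit t ∧ d ∈ maximalIdeal R ∧ ∃ x, (t ^ 2 - 4 * d) * (x ^ 2 + x) = d := by
  constructor
  · rintro ⟨l, u, hl, hu, rfl, rfl⟩
    obtain ⟨w, hw⟩ := (isUnit_add_of_mem_maximalIdeal (neg_mem hl) hu).exists_right_inv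
    refine ⟨isUnit_add_of_mem_maximalIdeal hl hu, Ideal.mul_mem_right _ _ hl, l * w, ?_⟩
    linear_combination (l ^ 2 * ((u - l) * w + 1) + l * (u - l)) * hw
  · rintro ⟨ht, hd, x, hx⟩
    have hsq : (1 + 2 * x) * ((1 + 2 * x) * (t ^ 2 - 4 * d)) = t ^ 2 := by
      linear_combination 4 * hx
    obtain ⟨w, hw⟩ := (isUnit_of_mul_isUnit_left (hsq ▸ ht.pow 2)).exists_right_inv
    have hsum : x * t * w + (1 + x) * t * w = t := by linear_combination t * hw
    have hprod : x * t * w * ((1 + x) * t * w) = d := by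
      linear_combination (-x * (1 + x) * w ^ 2) * hsq + ((1 + 2 * x) ^ 2 * w ^ 2) * hx
        + (d * ((1 + 2 * x) * w + 1)) * hw
    rcases isUnit_or_isUnit_of_isUnit_add (hsum ▸ ht) with hr | hs
    · exact ⟨_, _, (Ideal.unit_mul_mem_iff_mem _ hr).1 (hprod ▸ hd), hr, by rw [add_comm, hsum],
        by rw [mul_comm, hprod]⟩
    · exact ⟨_, _, (Ideal.mul_unit_mem_iff_mem _ hs).1 (hprod ▸ hd), hs, hsum, hprod⟩

end IsLocalRing

section MatrixRing

variable {R : Type*} {n : Type*} [Fintype n] [DecidableEq n]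

theorem mem_jacobson_bot_of_forall_isUnit_one_sub_mul [Ring R] {A : Matrix n n R}
    (h : ∀ y, IsUnit (1 - y * A)) (i j : n) : A i j ∈ Ideal.jacobson (⊥ : Ideal R) := by
  have hA : A ∈ (⊥ : TwoSidedIdeal (Matrix n n R)).jacobson := by
    refine TwoSidedIdeal.mem_jacobson_iff.2 fun y => ?_
    obtain ⟨u, hu⟩ := h (-y)
    refine ⟨↑u⁻¹, (TwoSidedIdeal.mem_bot _).2 ?_⟩
    rw [neg_mul, sub_neg_eq_add, add_comm] at hu
    rw [mul_assoc, sub_eq_zero, ← mul_add_one, ← hu, Units.inv_mul]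
  rw [← TwoSidedIdeal.matrix_jacobson_bot] at hA
  have hij := (TwoSidedIdeal.mem_matrix _ _ _).1 hA i j
  rw [← TwoSidedIdeal.mem_asIdeal, TwoSidedIdeal.asIdeal_jacobson] at hij
  simpa using hij

variable [CommRing R] [IsLocalRing R]

theorem isUnit_one_sub_of_map_residue_eq_zero {B : Matrix n n R}
    (hB : B.map (residue R) = 0) : IsUnit (1 - B) := by
  rw [isUnit_iff_isUnit_det, ← isUnit_map_iff (residue R), RingHom.map_det,
    RingHom.mapMatrix_apply, Matrix.map_sub _ (map_sub _),
    Matrix.map_one _ (map_zero _) (map_one _), hB, sub_zero, det_one]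
  exact isUnit_one

theorem isStronglyRadClean_of_forall_mem_maximalIdeal {A : Matrix n n R}
    (hA : ∀ i j, A i j ∈ maximalIdeal R) : IsStronglyRadClean A := by
  replace hA : A.map (residue R) = 0 := by ext i j; exact (residue_eq_zero_iff _).2 (hA i j)
  refine ⟨1, .one, ?_, by rw [mul_one, one_mul], ?_⟩
  · rw [← neg_sub]
    exact (isUnit_one_sub_of_map_residue_eq_zero hA).neg
  · rw [one_mul, mul_one, memCornerJacobson_one_iff]
    exact fun y => isUnit_one_sub_of_map_residue_eq_zero (by rw [Matrix.map_mul, hA, mul_zero])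

theorem isStronglyRadClean_smul_add_smul_one_sub {e : Matrix n n R} (he : IsIdempotentElem e)
    {a b : R} (ha : a ∈ maximalIdeal R) (hb : IsUnit b) :
    IsStronglyRadClean (a • e + b • (1 - e)) := by
  have hmul_e : (a • e + b • (1 - e)) * e = a • e := by
    simp only [add_mul, smul_mul_assoc, he.eq, he.one_sub_mul_self, smul_zero, add_zero]
  have he_mul : e * (a • e + b • (1 - e)) = a • e := by
    simp only [mul_add, mul_smul_comm, he.eq, he.mul_one_sub_self, smul_zero, add_zero]
  refine ⟨e, he, ?_, ?_, ?_⟩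
  · rw [show a • e + b • (1 - e) - e = (a - 1) • e + b • (1 - e) by module]
    refine isUnit_smul_add_smul_one_sub he ?_ hb
    rw [← neg_sub]
    exact (isUnit_one_sub_self_of_mem_nonunits a ha).neg
  · rw [hmul_e, he_mul]
  · rw [he_mul, smul_mul_assoc, he.eq]
    refine memCornerJacobson_of_forall_isUnit he (by rw [smul_mul_assoc, he.eq]) fun y => ?_
    refine isUnit_one_sub_of_map_residue_eq_zero ?_
    rw [mul_smul_comm, Matrix.map_smul' _ _ _ (map_mul _), (residue_eq_zero_iff a).2 ha, zero_smul]

end MatrixRing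

section FinTwo

variable {R : Type*} [CommRing R]

theorem mul_self_eq_trace_smul_sub_det_smul (N : Matrix (Fin 2) (Fin 2) R) :
    N * N = N.trace • N - N.det • 1 := by
  ext i j
  fin_cases i <;> fin_cases j <;> simp [mul_apply, trace_fin_two, det_fin_two] <;> ring

theorem add_adjugate_eq_trace_smul (N : Matrix (Fin 2) (Fin 2) R) :
    N + adjugate N = N.trace • 1 := by
  ext i j
  fin_cases i <;> fin_cases j <;> simp [adjugate_fin_two, trace_fin_two, add_comm]

theorem mul_mul_eq_trace_smul_of_det_eq_zero {e : Matrix (Fin 2) (Fin 2) R}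
    (he : IsIdempotentElem e) (hd : e.det = 0) (M : Matrix (Fin 2) (Fin 2) R) :
    e * M * e = (e * M * e).trace • e := by
  have hadj : adjugate (e * M * e) * e = 0 := by
    simp only [adjugate_mul_distrib, Matrix.mul_assoc, adjugate_mul, hd, zero_smul,
      Matrix.mul_zero]
  have h := congrArg (· * e) (add_adjugate_eq_trace_smul (e * M * e))
  rwa [add_mul, hadj, add_zero, smul_mul_assoc, one_mul, Matrix.mul_assoc (e * M), he.eq] at h

theorem det_one_sub_of_trace_eq_one {e : Matrix (Fin 2) (Fin 2) R} (ht : e.trace = 1)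
    (hd : e.det = 0) : (1 - e).det = 0 := by
  have h := add_adjugate_eq_trace_smul e
  rw [ht, one_smul, ← eq_sub_iff_add_eq'] at h
  rw [← h, det_adjugate, hd, Fintype.card_fin]
  norm_num

theorem trace_smul_add_smul_one_sub {e : Matrix (Fin 2) (Fin 2) R} (ht : e.trace = 1) (a b : R) :
    (a • e + b • (1 - e)).trace = a + b := by
  simp only [trace_add, trace_smul, trace_sub, trace_one, ht, Fintype.card_fin, smul_eq_mul]
  ring

theorem det_smul_add_smul_one_sub {e : Matrix (Fin 2) (Fin 2) R} (ht : e.trace = 1)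
    (hd : e.det = 0) (a b : R) : (a • e + b • (1 - e)).det = a * b := by
  rw [trace_fin_two] at ht
  rw [det_fin_two] at hd ⊢
  simp only [Matrix.add_apply, Matrix.smul_apply, Matrix.sub_apply, smul_eq_mul, one_apply_eq,
    one_apply_ne zero_ne_one, one_apply_ne one_ne_zero]
  linear_combination (a * b - b ^ 2) * ht + (b - a) ^ 2 * hd

theorem eq_smul_add_smul_one_sub_of_commute {e A : Matrix (Fin 2) (Fin 2) R}
    (he : IsIdempotentElem e) (ht : e.trace = 1) (hd : e.det = 0) (hAe : Commute A e) :
    A = (e * A * e).trace • e + ((1 - e) * A * (1 - e)).trace • (1 - e) := by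
  rw [← mul_mul_eq_trace_smul_of_det_eq_zero he hd,
    ← mul_mul_eq_trace_smul_of_det_eq_zero he.one_sub (det_one_sub_of_trace_eq_one ht hd),
    ← hAe.eq, ← ((Commute.one_right A).sub_right hAe).eq, Matrix.mul_assoc, he.eq,
    Matrix.mul_assoc, he.one_sub.eq, ← mul_add, add_sub_cancel, Matrix.mul_one]

theorem exists_isIdempotentElem_eq_smul_add_smul_one_sub {A : Matrix (Fin 2) (Fin 2) R}
    {l u : R} (hsum : l + u = A.trace) (hprod : l * u = A.det) (hlu : IsUnit (u - l)) :
    ∃ e, IsIdempotentElem e ∧ A = l • e + u • (1 - e) := by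
  obtain ⟨w, hw⟩ := hlu.exists_right_inv
  have hCH : A * A = (l + u) • A - (l * u) • 1 := by
    rw [hsum, hprod]
    exact mul_self_eq_trace_smul_sub_det_smul A
  have hB : (u • 1 - A) * (u • 1 - A) = (u - l) • (u • 1 - A) := by
    rw [sub_mul, mul_sub, mul_sub, hCH]
    simp only [smul_mul_assoc, mul_smul_comm, one_mul, mul_one, smul_smul]
    module
  refine ⟨w • (u • 1 - A), ?_, ?_⟩
  · rw [IsIdempotentElem, smul_mul_smul, hB, smul_smul]
    congr 1
    linear_combination w * hw
  · calc A = u • 1 - ((u - l) * w) • (u • 1 - A) := by rw [hw, one_smul, sub_sub_cancel]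
      _ = l • (w • (u • 1 - A)) + u • (1 - w • (u • 1 - A)) := by module

end FinTwo

section LocalFinTwo

variable {R : Type*} [CommRing R] [IsLocalRing R]

theorem eq_zero_or_eq_one_or_trace_eq_one_of_isIdempotentElem {e : Matrix (Fin 2) (Fin 2) R}
    (he : IsIdempotentElem e) : e = 0 ∨ e = 1 ∨ (e.trace = 1 ∧ e.det = 0) := by
  have hdet : IsIdempotentElem e.det := by rw [IsIdempotentElem, ← det_mul, he.eq]
  rcases eq_zero_or_eq_one_of_isIdempotentElem hdet with hd | hd
  · have hscal : e = e.trace • e := by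
      have h := mul_self_eq_trace_smul_sub_det_smul e
      rwa [he.eq, hd, zero_smul, sub_zero] at h
    have htr : IsIdempotentElem e.trace := by
      simpa only [IsIdempotentElem, trace_smul, smul_eq_mul] using (congrArg trace hscal).symm
    rcases eq_zero_or_eq_one_of_isIdempotentElem htr with ht | ht
    · left
      rw [hscal, ht, zero_smul]
    · exact .inr (.inr ⟨ht, hd⟩)
  · have hu : IsUnit e := (isUnit_iff_isUnit_det e).2 (hd ▸ isUnit_one)
    exact .inr (.inl ((IsIdempotentElem.iff_eq_one_of_isUnit hu).1 he))

theorem exists_mem_maximalIdeal_isUnit_of_trace_eq_one {A e : Matrix (Fin 2) (Fin 2) R}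
    (he : IsIdempotentElem e) (ht : e.trace = 1) (hd : e.det = 0) (hu : IsUnit (A - e))
    (hAe : A * e = e * A) (hJ : MemCornerJacobson e (e * A * e)) :
    ∃ l u, l ∈ maximalIdeal R ∧ IsUnit u ∧ l + u = A.trace ∧ l * u = A.det := by
  have hA := eq_smul_add_smul_one_sub_of_commute he ht hd hAe
  set l := (e * A * e).trace
  set m := ((1 - e) * A * (1 - e)).trace
  have hl : l ∈ maximalIdeal R := by
    rw [mul_mul_eq_trace_smul_of_det_eq_zero he hd] at hJ
    by_contra hl
    have he0 := eq_zero_of_memCornerJacobson_smul he (notMem_maximalIdeal.1 hl) hJ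
    simp [he0] at ht
  have hm : IsUnit m := by
    have hdet : (A - e).det = (l - 1) * m := by
      rw [hA, show l • e + m • (1 - e) - e = (l - 1) • e + m • (1 - e) by module,
        det_smul_add_smul_one_sub ht hd]
    exact isUnit_of_mul_isUnit_right (hdet ▸ (isUnit_iff_isUnit_det _).1 hu)
  refine ⟨l, m, hl, hm, ?_, ?_⟩
  · rw [hA, trace_smul_add_smul_one_sub ht]
  · rw [hA, det_smul_add_smul_one_sub ht hd]

theorem isStronglyRadClean_iff_exists_mem_maximalIdeal_isUnit {A : Matrix (Fin 2) (Fin 2) R} :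
    IsStronglyRadClean A ↔ IsUnit A ∨ (∀ i j, A i j ∈ maximalIdeal R) ∨
      ∃ l u, l ∈ maximalIdeal R ∧ IsUnit u ∧ l + u = A.trace ∧ l * u = A.det := by
  constructor
  · rintro ⟨e, he, hu, hAe, hJ⟩
    rcases eq_zero_or_eq_one_or_trace_eq_one_of_isIdempotentElem he with rfl | rfl | ⟨ht, hd⟩
    · exact .inl (by simpa using hu)
    · rw [one_mul, mul_one, memCornerJacobson_one_iff] at hJ
      refine .inr (.inl fun i j => ?_)
      rw [← jacobson_eq_maximalIdeal ⊥ bot_ne_top]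
      exact mem_jacobson_bot_of_forall_isUnit_one_sub_mul hJ i j
    · exact .inr (.inr (exists_mem_maximalIdeal_isUnit_of_trace_eq_one he ht hd hu hAe hJ))
  · rintro (hA | hA | ⟨l, u, hl, hu, hsum, hprod⟩)
    · exact isStronglyRadClean_of_isUnit hA
    · exact isStronglyRadClean_of_forall_mem_maximalIdeal hA
    · have hlu : IsUnit (u - l) := by
        simpa [neg_add_eq_sub] using isUnit_add_of_mem_maximalIdeal (neg_mem hl) hu
      obtain ⟨e, he, rfl⟩ := exists_isIdempotentElem_eq_smul_add_smul_one_sub hsum hprod hlu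
      exact isStronglyRadClean_smul_add_smul_one_sub he hl hu

end LocalFinTwo

theorem stmt5 {R : Type*} [CommRing R] [IsLocalRing R] (A : Matrix (Fin 2) (Fin 2) R) :
    IsStronglyRadClean A ↔
      IsUnit A ∨ (∀ i j, A i j ∈ Ideal.jacobson (⊥ : Ideal R)) ∨
      (IsUnit A.trace ∧ A.det ∈ Ideal.jacobson (⊥ : Ideal R) ∧
        ∃ x : R, (A.trace ^ 2 - 4 * A.det) * (x ^ 2 + x) = A.det) := by
  rw [jacobson_eq_maximalIdeal ⊥ bot_ne_top, ← exists_mem_maximalIdeal_isUnit_iff]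
  exact isStronglyRadClean_iff_exists_mem_maximalIdeal_isUnit
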